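/- arXiv:2302.08580 — 8 statements merged into one kernel-verified Lean document; each statement's English description precedes it below -/
import Mathlib

section
/- Let α ∈ (0,1) and let f : ℝ^d → ℝ be μ-strongly convex with minimizer x*. Suppose points x_k, x̂_k, x_{k+1} ∈ ℝ^d and step size η_k > 0 satisfy ‖x̂_k − x_k + η_k ∇f(x̂_k)‖ ≤ α‖x̂_k − x_k‖ and x_{k+1} = (1/(1+2η_k μ))(x_k − η_k ∇f(x̂_k)) + (2η_k μ/(1+2η_k μ)) x̂_k. Then ‖x_{k+1} − x*‖² ≤ ‖x_k − x*‖²/(1+2η_k μ). -/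
/-!
With `c = 1 + 2ημ`, the new iterate is `x_{k+1} - x* = (x̂ - x*) - c⁻¹ (x̂ - x_k + η ∇f(x̂))`.
Expanding, `c ‖x_{k+1} - x*‖²` equals `‖x_k - x*‖² - ‖x̂ - x_k‖² + c⁻¹ ‖x̂ - x_k + η ∇f(x̂)‖²`
plus `2ημ ‖x̂ - x*‖² - 2η ⟪∇f(x̂), x̂ - x*⟫`. The error term is dominated by `‖x̂ - x_k‖²` because
`α < 1 ≤ c`, and the last two terms sum to a nonpositive number by strong monotonicity of `∇f`,
since `∇f(x*) = 0`.
-/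

open Set InnerProductSpace
open scoped RealInnerProductSpace

theorem ConvexOn.add_le_of_hasFDerivAt {E : Type*} [NormedAddCommGroup E] [NormedSpace ℝ E]
    {s : Set E} {h : E → ℝ} {h' : E →L[ℝ] ℝ} {x y : E}
    (hc : ConvexOn ℝ s h) (hx : x ∈ s) (hy : y ∈ s) (hd : HasFDerivAt h h' x) :
    h x + h' (y - x) ≤ h y := by
  set ℓ : ℝ →ᵃ[ℝ] E := AffineMap.lineMap x y
  have hℓ0 : ℓ 0 = x := AffineMap.lineMap_apply_zero x y
  have hℓ1 : ℓ 1 = y := AffineMap.lineMap_apply_one x y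
  have hline : ConvexOn ℝ (ℓ ⁻¹' s) (h ∘ ℓ) := hc.comp_affineMap ℓ
  have hderiv : HasDerivAt (h ∘ ℓ) (h' (y - x)) 0 := by
    rw [← hℓ0] at hd
    exact hd.comp_hasDerivAt (0 : ℝ) AffineMap.hasDerivAt_lineMap
  have hslope := hline.le_slope_of_hasDerivAt (by simpa [hℓ0]) (by simpa [hℓ1]) zero_lt_one hderiv
  rw [slope_def_field, Function.comp_apply, Function.comp_apply, hℓ0, hℓ1, sub_zero,
    div_one] at hslope
  linarith

section InnerProductSpace

variable {E : Type*} [NormedAddCommGroup E] [InnerProductSpace ℝ E]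

theorem StrongConvexOn.add_inner_add_le_of_hasGradientAt [CompleteSpace E] {s : Set E} {μ : ℝ}
    {f : E → ℝ} {g x y : E} (hf : StrongConvexOn s μ f) (hx : x ∈ s) (hy : y ∈ s)
    (hd : HasGradientAt f g x) :
    f x + ⟪g, y - x⟫ + μ / 2 * ‖y - x‖ ^ 2 ≤ f y := by
  have hsq := (hasStrictFDerivAt_norm_sq x).hasFDerivAt.const_mul (μ / 2)
  have h := (strongConvexOn_iff_convex.mp hf).add_le_of_hasFDerivAt hx hy (hd.sub hsq)
  simp only [sub_apply, smul_apply, toDual_apply_apply, innerSL_apply_apply, smul_eq_mul,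
    nsmul_eq_mul, Nat.cast_ofNat, inner_sub_right, real_inner_self_eq_norm_sq] at h
  rw [norm_sub_sq_real, inner_sub_right, real_inner_comm x y]
  linarith

theorem StrongConvexOn.mul_norm_sub_sq_le_inner_gradient_sub [CompleteSpace E] {μ : ℝ}
    {f : E → ℝ} {g : E → E} (hf : StrongConvexOn univ μ f) (hg : ∀ z, HasGradientAt f (g z) z)
    (x y : E) :
    μ * ‖x - y‖ ^ 2 ≤ ⟪g x - g y, x - y⟫ := by
  have hxy := hf.add_inner_add_le_of_hasGradientAt (mem_univ x) (mem_univ y) (hg x)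
  have hyx := hf.add_inner_add_le_of_hasGradientAt (mem_univ y) (mem_univ x) (hg y)
  rw [norm_sub_rev y x, ← neg_sub x y, inner_neg_right] at hxy
  rw [inner_sub_left]
  linarith

theorem IsMinOn.hasGradientAt_eq_zero [CompleteSpace E] {f : E → ℝ} {g x : E} {s : Set E}
    (hmin : IsMinOn f s x) (hs : s ∈ nhds x) (hd : HasGradientAt f g x) : g = 0 :=
  (toDual ℝ E).injective <| by simpa using (hmin.isLocalMin hs).hasFDerivAt_eq_zero hd

theorem mul_norm_sub_inv_smul_sq (x y z g : E) (η : ℝ) {c : ℝ} (hc : c ≠ 0) :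
    c * ‖y - z - c⁻¹ • (y - x + η • g)‖ ^ 2 =
      ‖x - z‖ ^ 2 - ‖y - x‖ ^ 2 + c⁻¹ * ‖y - x + η • g‖ ^ 2
        - 2 * η * ⟪g, y - z⟫ + (c - 1) * ‖y - z‖ ^ 2 := by
  simp only [← real_inner_self_eq_norm_sq, inner_sub_left, inner_sub_right, inner_add_left,
    inner_add_right, real_inner_smul_left, real_inner_smul_right]
  simp only [real_inner_comm x y, real_inner_comm x z, real_inner_comm y z, real_inner_comm x g,
    real_inner_comm y g, real_inner_comm z g]
  field_simp
  ring

theorem norm_sub_inv_smul_sq_le {x y z g : E} {η c : ℝ} (hc : 1 ≤ c)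
    (hmono : (c - 1) * ‖y - z‖ ^ 2 ≤ 2 * η * ⟪g, y - z⟫)
    (herr : ‖y - x + η • g‖ ≤ ‖y - x‖) :
    ‖y - z - c⁻¹ • (y - x + η • g)‖ ^ 2 ≤ ‖x - z‖ ^ 2 / c := by
  have hc0 : 0 < c := zero_lt_one.trans_le hc
  have herr' : c⁻¹ * ‖y - x + η • g‖ ^ 2 ≤ ‖y - x‖ ^ 2 :=
    (mul_le_of_le_one_left (sq_nonneg _) (inv_le_one_of_one_le₀ hc)).trans (by gcongr)
  rw [le_div_iff₀ hc0, mul_comm, mul_norm_sub_inv_smul_sq x y z g η hc0.ne']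
  linarith

end InnerProductSpace

theorem qnpe_one_step_contraction_general {d : ℕ} (μ α ηk : ℝ)
    (f : EuclideanSpace ℝ (Fin d) → ℝ)
    (gf : EuclideanSpace ℝ (Fin d) → EuclideanSpace ℝ (Fin d))
    (xstar xk xhk xk1 : EuclideanSpace ℝ (Fin d))
    (hμ : 0 < μ) (hα1 : α < 1) (hη : 0 < ηk)
    (hgrad : ∀ z, HasGradientAt f (gf z) z)
    (hsc : StrongConvexOn Set.univ μ f)
    (hmin : ∀ y, f xstar ≤ f y)
    (happrox : ‖xhk - xk + ηk • gf xhk‖ ≤ α * ‖xhk - xk‖)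
    (hupdate : xk1 = (1 / (1 + 2 * ηk * μ)) • (xk - ηk • gf xhk)
        + ((2 * ηk * μ) / (1 + 2 * ηk * μ)) • xhk) :
    ‖xk1 - xstar‖ ^ 2 ≤ ‖xk - xstar‖ ^ 2 / (1 + 2 * ηk * μ) := by
  set c := 1 + 2 * ηk * μ with hc
  have hc1 : 1 ≤ c := le_add_of_nonneg_right (by positivity)
  have hgstar : gf xstar = 0 :=
    (isMinOn_univ_iff.mpr hmin).hasGradientAt_eq_zero Filter.univ_mem (hgrad xstar)
  have hmono : (c - 1) * ‖xhk - xstar‖ ^ 2 ≤ 2 * ηk * ⟪gf xhk, xhk - xstar⟫ := by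
    have h := hsc.mul_norm_sub_sq_le_inner_gradient_sub hgrad xhk xstar
    rw [hgstar, sub_zero] at h
    nlinarith
  have herr : ‖xhk - xk + ηk • gf xhk‖ ≤ ‖xhk - xk‖ :=
    happrox.trans (mul_le_of_le_one_left (norm_nonneg _) hα1.le)
  have hstep : xk1 - xstar = xhk - xstar - c⁻¹ • (xhk - xk + ηk • gf xhk) := by
    have hweight : 2 * ηk * μ / c = 1 - c⁻¹ := by field_simp; ring
    rw [hupdate, hweight]
    module
  rw [hstep]
  exact norm_sub_inv_smul_sq_le hc1 hmono herr

/-- One step of the (strongly convex) hybrid proximal extragradient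
update contracts the distance to the minimizer by a factor `1/(1 + 2 η μ)`. -/
theorem qnpe_one_step_contraction {d : ℕ} (μ α ηk : ℝ)
    (f : EuclideanSpace ℝ (Fin d) → ℝ)
    (gf : EuclideanSpace ℝ (Fin d) → EuclideanSpace ℝ (Fin d))
    (xstar xk xhk xk1 : EuclideanSpace ℝ (Fin d))
    (hμ : 0 < μ) (hα0 : 0 < α) (hα1 : α < 1) (hη : 0 < ηk)
    (hgrad : ∀ z, HasGradientAt f (gf z) z)
    (hsc : StrongConvexOn Set.univ μ f)
    (hmin : ∀ y, f xstar ≤ f y)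
    (happrox : ‖xhk - xk + ηk • gf xhk‖ ≤ α * ‖xhk - xk‖)
    (hupdate : xk1 = (1 / (1 + 2 * ηk * μ)) • (xk - ηk • gf xhk)
        + ((2 * ηk * μ) / (1 + 2 * ηk * μ)) • xhk) :
    ‖xk1 - xstar‖ ^ 2 ≤ ‖xk - xstar‖ ^ 2 / (1 + 2 * ηk * μ) :=
  qnpe_one_step_contraction_general μ α ηk f gf xstar xk xhk xk1 hμ hα1 hη hgrad hsc hmin happrox
    hupdate
end

section
/- Let η_0,...,η_{N−1} > 0 and μ > 0. Then ∏_{k=0}^{N−1} (1 + 2η_k μ)^{−1} ≤ (1 + 2μ √(N / Σ_{k=0}^{N−1} 1/η_k²))^{−N}. -/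
/-!
Write `a_k = 2 η_k μ`. The right-hand side replaces every `a_k` by the mean `√(N / Σ 1/a_k²)`,
which is at most the geometric mean `G` of the `a_k` (HM-GM applied to the `a_k²`). Huygens'
inequality `(1 + G)^N ≤ ∏ (1 + a_k)` then closes the argument; it is the weighted AM-GM inequality
applied once to the numbers `1/(1 + a_k)` and once to `a_k/(1 + a_k)`, whose sums add up to `1`.
-/

open Finset Real

namespace Real

variable {ι : Type*} (s : Finset ι)

theorem one_add_geom_mean_le_geom_mean_one_add_weighted (w a : ι → ℝ)
    (hw : ∀ i ∈ s, 0 ≤ w i) (hw' : ∑ i ∈ s, w i = 1) (ha : ∀ i ∈ s, 0 ≤ a i) :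
    1 + ∏ i ∈ s, a i ^ w i ≤ ∏ i ∈ s, (1 + a i) ^ w i := by
  have hpos : ∀ i ∈ s, 0 < 1 + a i := fun i hi => by linarith [ha i hi]
  have hP : 0 < ∏ i ∈ s, (1 + a i) ^ w i := prod_pos fun i hi => rpow_pos_of_pos (hpos i hi) _
  have amgm : ∀ b : ι → ℝ, (∀ i ∈ s, 0 ≤ b i) →
      (∏ i ∈ s, b i ^ w i) / ∏ i ∈ s, (1 + a i) ^ w i ≤
        ∑ i ∈ s, w i * (b i / (1 + a i)) := by
    intro b hb
    rw [← prod_div_distrib]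
    refine (prod_congr rfl fun i hi => (div_rpow (hb i hi) (hpos i hi).le _).symm).trans_le ?_
    exact geom_mean_le_arith_mean_weighted s w _ hw hw' fun i hi =>
      div_nonneg (hb i hi) (hpos i hi).le
  have h₁ := amgm (fun _ => 1) fun _ _ => zero_le_one
  have h₂ := amgm a ha
  have hsum : ∑ i ∈ s, w i * (1 / (1 + a i)) + ∑ i ∈ s, w i * (a i / (1 + a i)) = 1 := by
    rw [← sum_add_distrib]
    refine (sum_congr rfl fun i hi => ?_).trans hw'
    rw [← mul_add, ← add_div, div_self (hpos i hi).ne', mul_one]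
  simp only [one_rpow, prod_const_one] at h₁
  rw [← div_le_one hP, add_div]
  linarith

theorem one_add_geom_mean_pow_card_le_prod_one_add (a : ι → ℝ) (ha : ∀ i ∈ s, 0 ≤ a i) :
    (1 + (∏ i ∈ s, a i) ^ (#s : ℝ)⁻¹) ^ #s ≤ ∏ i ∈ s, (1 + a i) := by
  rcases s.eq_empty_or_nonempty with rfl | hs
  · simp
  have hn : #s ≠ 0 := card_ne_zero.2 hs
  have hw : ∑ _i ∈ s, (#s : ℝ)⁻¹ = 1 := by
    rw [sum_const, nsmul_eq_mul, mul_inv_cancel₀ (Nat.cast_ne_zero.2 hn)]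
  have h := one_add_geom_mean_le_geom_mean_one_add_weighted s (fun _ => (#s : ℝ)⁻¹) a
    (fun _ _ => by positivity) hw ha
  have h1a : ∀ i ∈ s, 0 ≤ 1 + a i := fun i hi => by linarith [ha i hi]
  rw [finsetProd_rpow s a ha, finsetProd_rpow s _ h1a] at h
  calc _ ≤ ((∏ i ∈ s, (1 + a i)) ^ (#s : ℝ)⁻¹) ^ #s :=
        pow_le_pow_left₀ (by positivity [prod_nonneg ha]) h _
    _ = ∏ i ∈ s, (1 + a i) := rpow_inv_natCast_pow (prod_nonneg h1a) hn

theorem sqrt_card_div_sum_inv_sq_le_geom_mean (hs : s.Nonempty) (a : ι → ℝ)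
    (ha : ∀ i ∈ s, 0 < a i) :
    √(#s / ∑ i ∈ s, 1 / a i ^ 2) ≤ (∏ i ∈ s, a i) ^ (#s : ℝ)⁻¹ := by
  have hprod : 0 ≤ ∏ i ∈ s, a i := prod_nonneg fun i hi => (ha i hi).le
  have h := harm_mean_le_geom_mean s hs (fun _ => 1) (fun i => a i ^ 2) (fun _ _ => one_pos)
    (by simpa using hs) (fun i hi => by positivity [ha i hi])
  simp only [sum_const, nsmul_eq_mul, mul_one, rpow_one, prod_pow] at h
  rw [sqrt_le_left (by positivity), rpow_pow_comm hprod]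
  exact h

theorem one_add_sqrt_card_div_sum_inv_sq_pow_card_le_prod_one_add (a : ι → ℝ)
    (ha : ∀ i ∈ s, 0 < a i) :
    (1 + √(#s / ∑ i ∈ s, 1 / a i ^ 2)) ^ #s ≤ ∏ i ∈ s, (1 + a i) := by
  rcases s.eq_empty_or_nonempty with rfl | hs
  · simp
  calc _ ≤ (1 + (∏ i ∈ s, a i) ^ (#s : ℝ)⁻¹) ^ #s := by
        gcongr
        exact sqrt_card_div_sum_inv_sq_le_geom_mean s hs a ha
    _ ≤ _ := one_add_geom_mean_pow_card_le_prod_one_add s a fun i hi => (ha i hi).le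

end Real

theorem product_contraction_jensen_general (N : ℕ) (μ : ℝ) (hμ : 0 < μ)
    (η : ℕ → ℝ) (hη : ∀ k < N, 0 < η k) :
    ∏ k ∈ Finset.range N, (1 + 2 * η k * μ)⁻¹ ≤
      ((1 + 2 * μ * Real.sqrt ((N : ℝ) / ∑ k ∈ Finset.range N, 1 / (η k) ^ 2))⁻¹) ^ N := by
  have ha : ∀ k ∈ range N, 0 < 2 * η k * μ := fun k hk => by
    have := hη k (mem_range.1 hk)
    positivity
  have hsum : ∑ k ∈ range N, 1 / (2 * η k * μ) ^ 2 =
      (∑ k ∈ range N, 1 / η k ^ 2) / (2 * μ) ^ 2 := by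
    rw [sum_div]
    exact sum_congr rfl fun k _ => by ring
  have hscale : 2 * μ * √(N / ∑ k ∈ range N, 1 / η k ^ 2) =
      √(N / ∑ k ∈ range N, 1 / (2 * η k * μ) ^ 2) := by
    rw [hsum, div_div_eq_mul_div, mul_comm (N : ℝ), mul_div_assoc, sqrt_mul (by positivity),
      sqrt_sq (by positivity)]
  have key := one_add_sqrt_card_div_sum_inv_sq_pow_card_le_prod_one_add (range N) _ ha
  rw [card_range, ← hscale] at key
  rw [prod_inv_distrib, inv_pow]
  exact inv_anti₀ (by positivity) key

/-- Jensen-type bound: the product of contraction factors is bounded by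
`(1 + 2μ √(N / Σ 1/η_k²))^{-N}`. -/
theorem product_contraction_jensen (N : ℕ) (hN : 0 < N) (μ : ℝ) (hμ : 0 < μ)
    (η : ℕ → ℝ) (hη : ∀ k < N, 0 < η k) :
    ∏ k ∈ Finset.range N, (1 + 2 * η k * μ)⁻¹ ≤
      ((1 + 2 * μ * Real.sqrt ((N : ℝ) / ∑ k ∈ Finset.range N, 1 / (η k) ^ 2))⁻¹) ^ N :=
  product_contraction_jensen_general N μ hμ η hη
end

section
/- Let σ_0 > 0, β ∈ (0,1), and let η_0,...,η_{N−1} > 0 satisfy: for each k ∈ {0,...,N−1}, either η_k = σ_k or η_k ≥ c_k, where σ_k = η_{k−1}/β for k ≥ 1 and c_k > 0 are given lower bounds. Then Σ_{k=0}^{N−1} 1/η_k² ≤ 1/((1−β²)σ_0²) + (1/(1−β²)) Σ_{k : η_k ≠ σ_k} 1/c_k². -/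
/-!
On a step without backtracking, `η k = η (k - 1) / β`, so `1 / η k ^ 2 = β ^ 2 / η (k - 1) ^ 2`;
on a backtracked step `1 / η k ^ 2 ≤ 1 / c k ^ 2`. Summing over `k < N` gives
`S ≤ 1 / σ0 ^ 2 + β ^ 2 * S + ∑_{k ∈ B} 1 / c k ^ 2` for `S = ∑ 1 / η k ^ 2`,
and solving for `S` yields the bound.
-/

open Finset

theorem sum_range_le_of_le_mul_prev_add {N : ℕ} {a b : ℕ → ℝ} {A q : ℝ}
    (ha : ∀ k, 0 ≤ a k) (hA : 0 ≤ A) (hq0 : 0 ≤ q) (hq1 : q < 1)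
    (h0 : 0 < N → a 0 ≤ A + b 0)
    (hsucc : ∀ k, k + 1 < N → a (k + 1) ≤ q * a k + b (k + 1)) :
    ∑ k ∈ range N, a k ≤ 1 / (1 - q) * (A + ∑ k ∈ range N, b k) := by
  have hshift : ∑ k ∈ range N, a k ≤ A + q * ∑ k ∈ range N, a k + ∑ k ∈ range N, b k := by
    rcases N with _ | n
    · simpa using hA
    have hprefix : ∑ k ∈ range n, a k ≤ ∑ k ∈ range (n + 1), a k := by
      simpa [sum_range_succ] using ha n
    calc ∑ k ∈ range (n + 1), a k
        = ∑ k ∈ range n, a (k + 1) + a 0 := sum_range_succ' _ _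
      _ ≤ ∑ k ∈ range n, (q * a k + b (k + 1)) + (A + b 0) := by
          gcongr with k hk
          · exact hsucc k (by simpa using hk)
          · exact h0 n.succ_pos
      _ = A + q * ∑ k ∈ range n, a k + ∑ k ∈ range (n + 1), b k := by
          rw [sum_add_distrib, ← mul_sum, sum_range_succ' b]; ring
      _ ≤ A + q * ∑ k ∈ range (n + 1), a k + ∑ k ∈ range (n + 1), b k := by gcongr
  rw [one_div_mul_eq_div, le_div_iff₀ (by linarith)]
  linarith

theorem one_div_sq_le_of_eq_or_le {η σ c : ℝ} (hc : 0 < c) (h : η = σ ∨ c ≤ η) :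
    1 / η ^ 2 ≤ 1 / σ ^ 2 + if η ≠ σ then 1 / c ^ 2 else 0 := by
  by_cases hησ : η = σ
  · simp [hησ]
  · have hcη : c ≤ η := h.resolve_left hησ
    rw [if_pos hησ]
    have : 1 / η ^ 2 ≤ 1 / c ^ 2 := one_div_le_one_div_of_le (by positivity) (by gcongr)
    linarith [one_div_nonneg.mpr (sq_nonneg σ)]

open Classical in
theorem sum_inverse_stepsize_sq_bound_general (N : ℕ) (β σ0 : ℝ)
    (hβ0 : 0 < β) (hβ1 : β < 1)
    (η σ c : ℕ → ℝ)
    (hσzero : σ 0 = σ0) (hσsucc : ∀ k, 1 ≤ k → σ k = η (k - 1) / β)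
    (hcpos : ∀ k < N, 0 < c k)
    (hcase : ∀ k < N, η k = σ k ∨ η k ≥ c k) :
    ∑ k ∈ Finset.range N, 1 / (η k) ^ 2 ≤
      1 / ((1 - β ^ 2) * σ0 ^ 2) +
        (1 / (1 - β ^ 2)) *
          ∑ k ∈ (Finset.range N).filter (fun k => η k ≠ σ k), 1 / (c k) ^ 2 := by
  have hstep : ∀ k < N, 1 / η k ^ 2 ≤ 1 / σ k ^ 2 + if η k ≠ σ k then 1 / c k ^ 2 else 0 :=
    fun k hk => one_div_sq_le_of_eq_or_le (hcpos k hk) (hcase k hk)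
  have hσ : ∀ k, 1 / σ (k + 1) ^ 2 = β ^ 2 * (1 / η k ^ 2) := fun k => by
    rw [hσsucc (k + 1) le_add_self, Nat.add_sub_cancel, div_pow, one_div_div, div_eq_mul_one_div]
  have hbound := sum_range_le_of_le_mul_prev_add (a := fun k => 1 / η k ^ 2)
    (b := fun k => if η k ≠ σ k then 1 / c k ^ 2 else 0)
    (fun k => by positivity) (by positivity : 0 ≤ 1 / σ0 ^ 2) (sq_nonneg β) (by nlinarith)
    (fun hN => by simpa [hσzero] using hstep 0 hN)
    (fun k hk => hσ k ▸ hstep (k + 1) hk)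
  rw [sum_filter, ← one_div_mul_one_div, ← mul_add]
  exact hbound

open Classical in
/-- Bound on the sum of inverse squared step sizes produced by the
backtracking line search. -/
theorem sum_inverse_stepsize_sq_bound (N : ℕ) (β σ0 : ℝ)
    (hβ0 : 0 < β) (hβ1 : β < 1) (hσ0 : 0 < σ0)
    (η σ c : ℕ → ℝ)
    (hσzero : σ 0 = σ0) (hσsucc : ∀ k, 1 ≤ k → σ k = η (k - 1) / β)
    (hηpos : ∀ k < N, 0 < η k) (hcpos : ∀ k < N, 0 < c k)
    (hcase : ∀ k < N, η k = σ k ∨ η k ≥ c k) :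
    ∑ k ∈ Finset.range N, 1 / (η k) ^ 2 ≤
      1 / ((1 - β ^ 2) * σ0 ^ 2) +
        (1 / (1 - β ^ 2)) *
          ∑ k ∈ (Finset.range N).filter (fun k => η k ≠ σ k), 1 / (c k) ^ 2 :=
  sum_inverse_stepsize_sq_bound_general N β σ0 hβ0 hβ1 η σ c hσzero hσsucc hcpos hcase
end

section
/- Let s, y ∈ ℝ^d with s ≠ 0, and define ℓ(B) = ‖y − Bs‖²/(2‖s‖²) on symmetric d×d matrices B. Then the gradient of ℓ at B is ∇ℓ(B) = (1/(2‖s‖²))(−s(y − Bs)ᵀ − (y − Bs)sᵀ), and its nuclear norm satisfies ‖∇ℓ(B)‖_* ≤ √(2ℓ(B)); in particular ‖∇ℓ(B)‖_F ≤ √(2ℓ(B)). -/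
/-- The nuclear norm of a real matrix: the sum of its singular values
(square roots of the eigenvalues of `Aᵀ * A`). -/
noncomputable def nuclearNorm {d : ℕ} (A : Matrix (Fin d) (Fin d) ℝ) : ℝ :=
  ∑ i, Real.sqrt ((show (Matrix.transpose A * A).IsHermitian by
    simpa [Matrix.conjTranspose_eq_transpose_of_trivial] using Matrix.isHermitian_conjTranspose_mul_self A).eigenvalues i)

/-- The Frobenius norm of a real matrix. -/
noncomputable def frobNorm {d : ℕ} (A : Matrix (Fin d) (Fin d) ℝ) : ℝ :=
  Real.sqrt (∑ i, ∑ j, (A i j) ^ 2)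

/-! Along `B + tΔ` the residual `r = y - Bs` moves affinely, `r - tΔs`, so the loss is a quadratic
in `t` with slope `-⟪r, Δs⟫ / ‖s‖²` at `0`; for symmetric `Δ` this is `tr (GΔ)`, because
`G = uvᵀ + vuᵀ` with `u = -s / (2‖s‖²)` and `v = r`.

Writing `G = Pᵀ Q` with `P`, `Q` of height two shows that `GᵀG` has at most two nonzero
eigenvalues `λ₁, λ₂`. Then `‖G‖_*² = (√λ₁ + √λ₂)² = tr (GᵀG) + √(2 (tr (GᵀG)² - tr ((GᵀG)²)))`,
and both traces are traces of powers of the `2 × 2` matrix `P Pᵀ Q Qᵀ` of inner products, which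
gives `‖uvᵀ + vuᵀ‖_* = 2‖u‖‖v‖ = ‖r‖ / ‖s‖ = √(2ℓ(B))`. Finally `‖G‖_F² = Σ λᵢ ≤ (Σ √λᵢ)²`. -/

open Matrix Finset
open scoped InnerProductSpace

theorem sq_sum_sqrt_eq_of_card_le_two {ι : Type*} [DecidableEq ι] (S : Finset ι) (x : ι → ℝ)
    (hx : ∀ i ∈ S, 0 ≤ x i) (hS : #S ≤ 2) :
    (∑ i ∈ S, √(x i)) ^ 2 = ∑ i ∈ S, x i + √(2 * ((∑ i ∈ S, x i) ^ 2 - ∑ i ∈ S, x i ^ 2)) := by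
  interval_cases h : #S
  · simp [card_eq_zero.mp h]
  · obtain ⟨i, rfl⟩ := card_eq_one.mp h
    simp [Real.sq_sqrt (hx i (mem_singleton_self i))]
  · obtain ⟨i, j, hij, rfl⟩ := card_eq_two.mp h
    have hi := hx i (by simp)
    have hj := hx j (by simp)
    have hcross : 2 * ((x i + x j) ^ 2 - (x i ^ 2 + x j ^ 2)) = (2 * (√(x i) * √(x j))) ^ 2 := by
      rw [mul_pow, mul_pow, Real.sq_sqrt hi, Real.sq_sqrt hj]; ring
    rw [sum_pair hij, sum_pair hij, sum_pair hij, hcross, Real.sqrt_sq (by positivity), add_sq,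
      Real.sq_sqrt hi, Real.sq_sqrt hj]
    ring

theorem sq_sum_sqrt_eq_of_card_support_le_two {ι : Type*} [Fintype ι] [DecidableEq ι] (x : ι → ℝ)
    (hx : ∀ i, 0 ≤ x i) (h : #{i | x i ≠ 0} ≤ 2) :
    (∑ i, √(x i)) ^ 2 = ∑ i, x i + √(2 * ((∑ i, x i) ^ 2 - ∑ i, x i ^ 2)) := by
  have restrict (g : ι → ℝ) (hg : ∀ i, x i = 0 → g i = 0) : ∑ i with x i ≠ 0, g i = ∑ i, g i :=
    sum_filter_of_ne fun i _ hgi hxi => hgi (hg i hxi)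
  rw [← restrict (fun i => √(x i)) fun i hi => by simp [hi], ← restrict x fun i hi => hi,
    ← restrict (fun i => x i ^ 2) fun i hi => by simp [hi]]
  exact sq_sum_sqrt_eq_of_card_le_two _ x (fun i _ => hx i) h

namespace Matrix.IsHermitian
variable {𝕜 n : Type*} [RCLike 𝕜] [Fintype n] [DecidableEq n] {A : Matrix n n 𝕜}

theorem trace_pow_eq_sum_eigenvalues_pow (hA : A.IsHermitian) (k : ℕ) :
    (A ^ k).trace = ∑ i, (hA.eigenvalues i : 𝕜) ^ k := by
  conv_lhs => rw [hA.spectral_theorem, ← map_pow, Unitary.conjStarAlgAut_apply, trace_mul_cycle,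
    Unitary.coe_star_mul_self, one_mul, diagonal_pow, trace_diagonal]
  simp

end Matrix.IsHermitian

theorem nuclearNorm_nonneg {d : ℕ} (A : Matrix (Fin d) (Fin d) ℝ) : 0 ≤ nuclearNorm A :=
  sum_nonneg fun _ _ => Real.sqrt_nonneg _

theorem nuclearNorm_sq_of_rank_le_two {d : ℕ} (A : Matrix (Fin d) (Fin d) ℝ) (hA : A.rank ≤ 2) :
    nuclearNorm A ^ 2 =
      (Aᵀ * A).trace + √(2 * ((Aᵀ * A).trace ^ 2 - ((Aᵀ * A) ^ 2).trace)) := by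
  have hM : (Aᵀ * A).IsHermitian := isHermitian_conjTranspose_mul_self A
  have hcard : #{i | hM.eigenvalues i ≠ 0} ≤ 2 := by
    rwa [← Fintype.card_subtype, ← hM.rank_eq_card_non_zero_eigs, rank_transpose_mul_self]
  have h1 := hM.trace_eq_sum_eigenvalues
  have h2 := hM.trace_pow_eq_sum_eigenvalues_pow 2
  simp only [RCLike.ofReal_real_eq_id, id] at h1 h2
  rw [h1, h2]
  exact sq_sum_sqrt_eq_of_card_support_le_two _ (eigenvalues_conjTranspose_mul_self_nonneg A) hcard

theorem frobNorm_le_nuclearNorm {d : ℕ} (A : Matrix (Fin d) (Fin d) ℝ) :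
    frobNorm A ≤ nuclearNorm A := by
  have hM : (Aᵀ * A).IsHermitian := isHermitian_conjTranspose_mul_self A
  have hnn := eigenvalues_conjTranspose_mul_self_nonneg A
  have hfrob : ∑ i, ∑ j, A i j ^ 2 = ∑ i, hM.eigenvalues i := by
    have := hM.trace_eq_sum_eigenvalues
    simp only [RCLike.ofReal_real_eq_id, id] at this
    rw [← this, trace, sum_comm]
    simp [mul_apply, sq]
  have hsq : ∑ i, hM.eigenvalues i = ∑ i, √(hM.eigenvalues i) ^ 2 :=
    sum_congr rfl fun i _ => (Real.sq_sqrt (hnn i)).symm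
  rw [frobNorm, hfrob, hsq, Real.sqrt_le_iff]
  exact ⟨sum_nonneg fun i _ => Real.sqrt_nonneg _,
    sum_sq_le_sq_sum_of_nonneg fun i _ => Real.sqrt_nonneg _⟩

theorem EuclideanSpace.dotProduct_ofLp {ι : Type*} [Fintype ι] (x y : EuclideanSpace ℝ ι) :
    x.ofLp ⬝ᵥ y.ofLp = ⟪x, y⟫_ℝ := by
  rw [EuclideanSpace.inner_eq_star_dotProduct, star_trivial, dotProduct_comm]

theorem Matrix.mul_pow_succ_eq_mul_pow_mul {m n R : Type*} [Fintype m] [Fintype n]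
    [DecidableEq m] [DecidableEq n] [Semiring R] (X : Matrix m n R) (Y : Matrix n m R) (k : ℕ) :
    (X * Y) ^ (k + 1) = X * (Y * X) ^ k * Y := by
  induction k with
  | zero => simp
  | succ k ih => rw [pow_succ, ih, pow_succ]; simp only [Matrix.mul_assoc]

theorem Matrix.trace_mul_pow_succ_comm {m n R : Type*} [Fintype m] [Fintype n]
    [DecidableEq m] [DecidableEq n] [CommSemiring R] (X : Matrix m n R) (Y : Matrix n m R)
    (k : ℕ) : ((X * Y) ^ (k + 1)).trace = ((Y * X) ^ (k + 1)).trace := by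
  rw [mul_pow_succ_eq_mul_pow_mul, Matrix.mul_assoc, trace_mul_comm, Matrix.mul_assoc, ← pow_succ]

theorem Matrix.of_mul_transpose_of {n R : Type*} [Fintype n] [Mul R] [AddCommMonoid R]
    (a b c e : n → R) :
    of ![a, b] * (of ![c, e])ᵀ = !![a ⬝ᵥ c, a ⬝ᵥ e; b ⬝ᵥ c, b ⬝ᵥ e] := by
  ext i j
  fin_cases i <;> fin_cases j <;> rfl

theorem nuclearNorm_vecMulVec_add_vecMulVec_swap {d : ℕ} (u v : EuclideanSpace ℝ (Fin d)) :
    nuclearNorm (vecMulVec u v + vecMulVec v u) = 2 * (‖u‖ * ‖v‖) := by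
  set P : Matrix (Fin 2) (Fin d) ℝ := of ![u.ofLp, v.ofLp]
  set Q : Matrix (Fin 2) (Fin d) ℝ := of ![v.ofLp, u.ofLp]
  have hfac : vecMulVec u v + vecMulVec v u = Pᵀ * Q := by
    ext i j; simp [P, Q, mul_apply, Fin.sum_univ_two, vecMulVec_apply]
  have hK : P * Pᵀ * (Q * Qᵀ) = !![‖u‖ ^ 2, ⟪u, v⟫_ℝ; ⟪u, v⟫_ℝ, ‖v‖ ^ 2] *
      !![‖v‖ ^ 2, ⟪u, v⟫_ℝ; ⟪u, v⟫_ℝ, ‖u‖ ^ 2] := by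
    simp only [P, Q, of_mul_transpose_of, EuclideanSpace.dotProduct_ofLp,
      real_inner_self_eq_norm_sq, real_inner_comm u v]
  have hAtA : (Pᵀ * Q)ᵀ * (Pᵀ * Q) = Qᵀ * (P * Pᵀ * Q) := by
    simp only [transpose_mul, transpose_transpose, Matrix.mul_assoc]
  have hK' : P * Pᵀ * Q * Qᵀ = P * Pᵀ * (Q * Qᵀ) := Matrix.mul_assoc _ _ _
  have htr1 := trace_mul_pow_succ_comm Qᵀ (P * Pᵀ * Q) 0
  have htr2 := trace_mul_pow_succ_comm Qᵀ (P * Pᵀ * Q) 1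
  rw [← hAtA, hK', hK] at htr1 htr2
  simp only [zero_add, pow_one, Nat.reduceAdd, sq, mul_fin_two, trace_fin_two_of] at htr1 htr2
  have hCS : ⟪u, v⟫_ℝ ^ 2 ≤ ‖u‖ ^ 2 * ‖v‖ ^ 2 := by
    rw [← mul_pow, ← sq_abs]
    exact pow_le_pow_left₀ (abs_nonneg _) (abs_real_inner_le_norm u v) 2
  have hdisc : 2 * (((Pᵀ * Q)ᵀ * (Pᵀ * Q)).trace ^ 2 - (((Pᵀ * Q)ᵀ * (Pᵀ * Q)) ^ 2).trace) =
      (2 * (‖u‖ ^ 2 * ‖v‖ ^ 2 - ⟪u, v⟫_ℝ ^ 2)) ^ 2 := by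
    rw [sq ((Pᵀ * Q)ᵀ * (Pᵀ * Q)), htr1, htr2]
    ring
  have hsq :=
    nuclearNorm_sq_of_rank_le_two (Pᵀ * Q) ((rank_mul_le_left _ _).trans (rank_le_width _))
  rw [hdisc, Real.sqrt_sq (by linarith), htr1, ← hfac] at hsq
  refine (sq_eq_sq₀ (nuclearNorm_nonneg _) (by positivity)).mp (hsq.trans ?_)
  ring

theorem hasDerivAt_norm_sub_smul_sq {E : Type*} [NormedAddCommGroup E] [InnerProductSpace ℝ E]
    (x v : E) : HasDerivAt (fun t : ℝ => ‖x - t • v‖ ^ 2) (-2 * ⟪x, v⟫_ℝ) 0 := by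
  have hline : HasDerivAt (fun t : ℝ => x - t • v) (-v) 0 := by
    simpa using ((hasDerivAt_id (0 : ℝ)).smul_const v).const_sub x
  simpa [inner_neg_right] using hline.norm_sq

theorem hasDerivAt_norm_sq_sub_toLp_mulVec {n : Type*} [Fintype n] (s y : EuclideanSpace ℝ n)
    (B Δ : Matrix n n ℝ) :
    HasDerivAt (fun t : ℝ => ‖y - WithLp.toLp 2 ((B + t • Δ) *ᵥ s)‖ ^ 2)
      (-2 * ⟪y - WithLp.toLp 2 (B *ᵥ s), WithLp.toLp 2 (Δ *ᵥ s)⟫_ℝ) 0 := by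
  have hline (t : ℝ) : y - WithLp.toLp 2 ((B + t • Δ) *ᵥ s) =
      y - WithLp.toLp 2 (B *ᵥ s) - t • WithLp.toLp 2 (Δ *ᵥ s) := by
    simp only [add_mulVec, smul_mulVec, WithLp.toLp_add, WithLp.toLp_smul]
    abel
  simp_rw [hline]
  exact hasDerivAt_norm_sub_smul_sq _ _

theorem Matrix.trace_vecMulVec_add_vecMulVec_swap_mul {n R : Type*} [Fintype n] [CommSemiring R]
    (u v : n → R) {Δ : Matrix n n R} (hΔ : Δ.IsSymm) :
    ((vecMulVec u v + vecMulVec v u) * Δ).trace = 2 * (v ⬝ᵥ Δ *ᵥ u) := by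
  rw [add_mul, trace_add, vecMulVec_mul, vecMulVec_mul, trace_vecMulVec, trace_vecMulVec,
    dotProduct_comm, ← dotProduct_mulVec, ← mulVec_transpose, hΔ.eq]
  ring

theorem loss_gradient_and_norm_bound_general {d : ℕ}
    (s y : EuclideanSpace ℝ (Fin d)) (hs : s ≠ 0)
    (B : Matrix (Fin d) (Fin d) ℝ)
    (ℓ : Matrix (Fin d) (Fin d) ℝ → ℝ)
    (hℓ : ∀ A : Matrix (Fin d) (Fin d) ℝ,
      ℓ A = ‖y - (show EuclideanSpace ℝ (Fin d) from WithLp.toLp 2 (A.mulVec s))‖ ^ 2 / (2 * ‖s‖ ^ 2))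
    (G : Matrix (Fin d) (Fin d) ℝ)
    (hG : G = (1 / (2 * ‖s‖ ^ 2)) •
      (-(Matrix.vecMulVec s (y - (show EuclideanSpace ℝ (Fin d) from WithLp.toLp 2 (B.mulVec s))))
        - Matrix.vecMulVec (y - (show EuclideanSpace ℝ (Fin d) from WithLp.toLp 2 (B.mulVec s))) s)) :
    (∀ Δ : Matrix (Fin d) (Fin d) ℝ, Δ.IsSymm →
      HasDerivAt (fun t : ℝ => ℓ (B + t • Δ)) (Matrix.trace (G * Δ)) 0) ∧
    nuclearNorm G ≤ Real.sqrt (2 * ℓ B) ∧ frobNorm G ≤ Real.sqrt (2 * ℓ B) := by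
  set r : EuclideanSpace ℝ (Fin d) := y - WithLp.toLp 2 (B *ᵥ s)
  set c : ℝ := 1 / (2 * ‖s‖ ^ 2)
  have hℓ' (A : Matrix (Fin d) (Fin d) ℝ) :
      ℓ A = ‖y - WithLp.toLp 2 (A *ᵥ s)‖ ^ 2 / (2 * ‖s‖ ^ 2) := hℓ A
  have hGr : G = vecMulVec (-c • s) r + vecMulVec r (-c • s) := by
    rw [hG, neg_smul, WithLp.ofLp_neg, WithLp.ofLp_smul, neg_vecMulVec, vecMulVec_neg,
      smul_vecMulVec, vecMulVec_smul]
    module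
  have hnuc : nuclearNorm G = √(2 * ℓ B) := by
    have hs' : ‖s‖ ≠ 0 := norm_ne_zero_iff.mpr hs
    have hℓB : ℓ B = ‖r‖ ^ 2 / (2 * ‖s‖ ^ 2) := hℓ B
    have h2ℓ : 2 * ℓ B = (‖r‖ / ‖s‖) ^ 2 := by rw [hℓB]; field_simp
    rw [h2ℓ, Real.sqrt_sq (by positivity), hGr, nuclearNorm_vecMulVec_add_vecMulVec_swap,
      norm_smul, norm_neg, Real.norm_of_nonneg (by positivity)]
    simp only [c]
    field_simp
  refine ⟨fun Δ hΔ => ?_, hnuc.le, hnuc ▸ frobNorm_le_nuclearNorm G⟩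
  simp_rw [hℓ']
  refine ((hasDerivAt_norm_sq_sub_toLp_mulVec s y B Δ).div_const _).congr_deriv ?_
  rw [hGr, trace_vecMulVec_add_vecMulVec_swap_mul _ _ hΔ, ← EuclideanSpace.dotProduct_ofLp]
  simp only [c, WithLp.ofLp_smul, WithLp.ofLp_neg, neg_smul, mulVec_neg,
    mulVec_smul, dotProduct_neg, dotProduct_smul, smul_eq_mul]
  ring

/-- The gradient of the loss `ℓ(B) = ‖y − Bs‖²/(2‖s‖²)` on symmetric
matrices (with the trace inner product) is
`(1/(2‖s‖²))(−s(y−Bs)ᵀ − (y−Bs)sᵀ)`, and its nuclear (hence Frobenius) norm is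
at most `√(2ℓ(B))`. -/
theorem loss_gradient_and_norm_bound {d : ℕ}
    (s y : EuclideanSpace ℝ (Fin d)) (hs : s ≠ 0)
    (B : Matrix (Fin d) (Fin d) ℝ) (hB : B.IsSymm)
    (ℓ : Matrix (Fin d) (Fin d) ℝ → ℝ)
    (hℓ : ∀ A : Matrix (Fin d) (Fin d) ℝ,
      ℓ A = ‖y - (show EuclideanSpace ℝ (Fin d) from WithLp.toLp 2 (A.mulVec s))‖ ^ 2 / (2 * ‖s‖ ^ 2))
    (G : Matrix (Fin d) (Fin d) ℝ)
    (hG : G = (1 / (2 * ‖s‖ ^ 2)) •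
      (-(Matrix.vecMulVec s (y - (show EuclideanSpace ℝ (Fin d) from WithLp.toLp 2 (B.mulVec s))))
        - Matrix.vecMulVec (y - (show EuclideanSpace ℝ (Fin d) from WithLp.toLp 2 (B.mulVec s))) s)) :
    (∀ Δ : Matrix (Fin d) (Fin d) ℝ, Δ.IsSymm →
      HasDerivAt (fun t : ℝ => ℓ (B + t • Δ)) (Matrix.trace (G * Δ)) 0) ∧
    nuclearNorm G ≤ Real.sqrt (2 * ℓ B) ∧ frobNorm G ≤ Real.sqrt (2 * ℓ B) :=
  loss_gradient_and_norm_bound_general s y hs B ℓ hℓ G hG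
end

section
/- Let C ⊆ ℝ^n be convex with 0 ∈ C, δ > 0, w ∈ ℝ^n, γ > 1, s ∈ ℝ^n with ⟨s, w − x⟩ ≥ γ − 1 for all x ∈ C. Let x_t = w/γ, let g ∈ ℝ^n, and define g̃ = g + max{0, −⟨g, x_t⟩} s. Then for every x ∈ C, ⟨g̃, w − x⟩ ≥ ⟨g, x_t − x⟩. -/
open scoped RealInnerProductSpace

/-- The surrogate-gradient inequality of the projection-free online
learning reduction. -/
theorem surrogate_gradient_inequality {n : ℕ}
    (C : Set (EuclideanSpace ℝ (Fin n))) (hC : Convex ℝ C) (h0 : (0 : EuclideanSpace ℝ (Fin n)) ∈ C)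
    (δ : ℝ) (hδ : 0 < δ)
    (w s g xt gt : EuclideanSpace ℝ (Fin n)) (γ : ℝ) (hγ : 1 < γ)
    (hsep : ∀ x ∈ C, ⟪s, w - x⟫ ≥ γ - 1)
    (hxt : xt = γ⁻¹ • w)
    (hgt : gt = g + max 0 (-⟪g, xt⟫) • s) :
    ∀ x ∈ C, ⟪gt, w - x⟫ ≥ ⟪g, xt - x⟫ := by
  intro x hx
  have hγ0 : γ ≠ 0 := by linarith
  have hw : w = γ • xt := by rw [hxt, smul_smul, mul_inv_cancel₀ hγ0, one_smul]
  set m := max 0 (-⟪g, xt⟫) with hm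
  have hm0 : 0 ≤ m := le_max_left _ _
  have hm1 : m ≥ -⟪g, xt⟫ := le_max_right _ _
  have h1 : ⟪gt, w - x⟫ = ⟪g, w - x⟫ + m * ⟪s, w - x⟫ := by
    rw [hgt, inner_add_left, real_inner_smul_left]
  have h2 : ⟪g, w - x⟫ = ⟪g, xt - x⟫ + (γ - 1) * ⟪g, xt⟫ := by
    rw [hw, inner_sub_right, inner_sub_right, real_inner_smul_right]; ring
  have h3 : m * ⟪s, w - x⟫ ≥ m * (γ - 1) := by
    exact mul_le_mul_of_nonneg_left (hsep x hx) hm0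
  have h4 : (γ - 1) * ⟪g, xt⟫ + m * (γ - 1) ≥ 0 := by nlinarith
  linarith
end

section
/- Let W be a symmetric d×d matrix with eigenvalues λ₁ ≥ ... ≥ λ_d, let ε ∈ (0, 1/2), and suppose unit vectors u₁, u_d satisfy ⟨Wu₁, u₁⟩ ≥ λ₁ − ε(λ₁ − λ_d) and ⟨Wu_d, u_d⟩ ≤ λ_d + ε(λ₁ − λ_d). Set λ̂₁ = ⟨Wu₁,u₁⟩, λ̂_d = ⟨Wu_d,u_d⟩, and γ = max{λ̂₁, −λ̂_d}. Then ‖W‖_op ≤ γ/(1 − 2ε). -/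
/-!
For a symmetric operator the norm is the supremum of `|⟪T x, x⟫| / ‖x‖ ^ 2`, so
`‖W‖ ≤ max l1 (-ld)` as soon as `ld ‖x‖² ≤ ⟪W x, x⟫ ≤ l1 ‖x‖²`. Writing `a`, `b` for the two
Rayleigh quotients at `u1`, `ud`, the hypotheses give the gap bound `(1 - 2ε)(l1 - ld) ≤ a - b`,
whence `(1 - 2ε) l1 ≤ (1 - ε) a + ε (-b) ≤ γ` and `(1 - 2ε)(-ld) ≤ ε a + (1 - ε)(-b) ≤ γ`.
-/

open scoped RealInnerProductSpace

/-- The operator (spectral) norm of a real matrix, via its action on Euclidean space. -/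
noncomputable def matrixOpNorm {d : ℕ} (W : Matrix (Fin d) (Fin d) ℝ) : ℝ :=
  ‖Matrix.toEuclideanCLM (𝕜 := ℝ) W‖

theorem ContinuousLinearMap.norm_le_max_of_inner_self_bounds {E : Type*}
    [NormedAddCommGroup E] [InnerProductSpace ℝ E] {T : E →L[ℝ] E}
    (hT : (T : E →ₗ[ℝ] E).IsSymmetric) {lo hi : ℝ} (hlo_hi : lo ≤ hi)
    (hlo : ∀ x, lo * ‖x‖ ^ 2 ≤ ⟪T x, x⟫) (hhi : ∀ x, ⟪T x, x⟫ ≤ hi * ‖x‖ ^ 2) :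
    ‖T‖ ≤ max hi (-lo) := by
  rw [T.norm_eq_iSup_rayleighQuotient hT]
  refine ciSup_le fun x => ?_
  rcases eq_or_ne x 0 with rfl | hx
  · simp only [rayleighQuotient_apply_zero, abs_zero, le_max_iff]
    by_contra! h
    linarith
  have hx2 : 0 < ‖x‖ ^ 2 := by positivity
  rw [rayleighQuotient, reApplyInnerSelf_apply, RCLike.re_to_real, abs_le,
    le_div_iff₀ hx2, div_le_iff₀ hx2]
  constructor
  · nlinarith [hlo x, le_max_right hi (-lo)]
  · nlinarith [hhi x, le_max_left hi (-lo)]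

theorem max_le_max_div_of_approx_extremes {l1 ld a b ε : ℝ} (hε0 : 0 ≤ ε) (hε1 : ε < 1 / 2)
    (ha : l1 - ε * (l1 - ld) ≤ a) (hb : b ≤ ld + ε * (l1 - ld)) :
    max l1 (-ld) ≤ max a (-b) / (1 - 2 * ε) := by
  have hden : 0 < 1 - 2 * ε := by linarith
  have gap : (1 - 2 * ε) * (l1 - ld) ≤ a - b := by linarith
  have hl1 : (1 - 2 * ε) * l1 ≤ (1 - ε) * a + ε * -b := by
    nlinarith [mul_le_mul_of_nonneg_left gap hε0]
  have hld : (1 - 2 * ε) * -ld ≤ ε * a + (1 - ε) * -b := by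
    nlinarith [mul_le_mul_of_nonneg_left gap hε0]
  rw [le_div_iff₀ hden, max_mul_of_nonneg _ _ hden.le, mul_comm l1, mul_comm (-ld)]
  exact max_le (hl1.trans (Convex.combo_le_max a (-b) (by linarith) hε0 (by ring)))
    (hld.trans (Convex.combo_le_max a (-b) hε0 (by linarith) (by ring)))

theorem approx_extreme_eigenvectors_opnorm_bound_general {d : ℕ}
    (W : Matrix (Fin d) (Fin d) ℝ) (hW : W.IsSymm)
    (l1 ld ε : ℝ) (hε0 : 0 < ε) (hε1 : ε < 1 / 2)
    (hub : ∀ v : EuclideanSpace ℝ (Fin d),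
      ⟪(show EuclideanSpace ℝ (Fin d) from WithLp.toLp 2 (W.mulVec v)), v⟫ ≤ l1 * ‖v‖ ^ 2)
    (hlb : ∀ v : EuclideanSpace ℝ (Fin d),
      ld * ‖v‖ ^ 2 ≤ ⟪(show EuclideanSpace ℝ (Fin d) from WithLp.toLp 2 (W.mulVec v)), v⟫)
    (u1 ud : EuclideanSpace ℝ (Fin d)) (hu1 : ‖u1‖ = 1)
    (h1 : ⟪(show EuclideanSpace ℝ (Fin d) from WithLp.toLp 2 (W.mulVec u1)), u1⟫ ≥ l1 - ε * (l1 - ld))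
    (hd : ⟪(show EuclideanSpace ℝ (Fin d) from WithLp.toLp 2 (W.mulVec ud)), ud⟫ ≤ ld + ε * (l1 - ld))
    (γ : ℝ)
    (hγ : γ = max ⟪(show EuclideanSpace ℝ (Fin d) from WithLp.toLp 2 (W.mulVec u1)), u1⟫
      (-⟪(show EuclideanSpace ℝ (Fin d) from WithLp.toLp 2 (W.mulVec ud)), ud⟫)) :
    matrixOpNorm W ≤ γ / (1 - 2 * ε) := by
  have hT : (Matrix.toEuclideanLin W).IsSymmetric :=
    Matrix.isSymmetric_toEuclideanLin_iff.mpr (Matrix.isHermitian_iff_isSymm.mpr hW)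
  have hld_l1 : ld ≤ l1 := by
    have := (hlb u1).trans (hub u1)
    rwa [hu1, one_pow, mul_one, mul_one] at this
  rw [hγ]
  exact (ContinuousLinearMap.norm_le_max_of_inner_self_bounds
    (T := Matrix.toEuclideanCLM (𝕜 := ℝ) W) hT hld_l1 hlb hub).trans
    (max_le_max_div_of_approx_extremes hε0.le hε1 h1 hd)

/-- Approximate extreme eigenvectors certify the spectral norm bound
`‖W‖_op ≤ γ/(1 − 2ε)`. -/
theorem approx_extreme_eigenvectors_opnorm_bound {d : ℕ}
    (W : Matrix (Fin d) (Fin d) ℝ) (hW : W.IsSymm)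
    (l1 ld ε : ℝ) (hε0 : 0 < ε) (hε1 : ε < 1 / 2)
    (hub : ∀ v : EuclideanSpace ℝ (Fin d),
      ⟪(show EuclideanSpace ℝ (Fin d) from WithLp.toLp 2 (W.mulVec v)), v⟫ ≤ l1 * ‖v‖ ^ 2)
    (hlb : ∀ v : EuclideanSpace ℝ (Fin d),
      ld * ‖v‖ ^ 2 ≤ ⟪(show EuclideanSpace ℝ (Fin d) from WithLp.toLp 2 (W.mulVec v)), v⟫)
    (u1 ud : EuclideanSpace ℝ (Fin d)) (hu1 : ‖u1‖ = 1) (hud : ‖ud‖ = 1)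
    (h1 : ⟪(show EuclideanSpace ℝ (Fin d) from WithLp.toLp 2 (W.mulVec u1)), u1⟫ ≥ l1 - ε * (l1 - ld))
    (hd : ⟪(show EuclideanSpace ℝ (Fin d) from WithLp.toLp 2 (W.mulVec ud)), ud⟫ ≤ ld + ε * (l1 - ld))
    (γ : ℝ)
    (hγ : γ = max ⟪(show EuclideanSpace ℝ (Fin d) from WithLp.toLp 2 (W.mulVec u1)), u1⟫
      (-⟪(show EuclideanSpace ℝ (Fin d) from WithLp.toLp 2 (W.mulVec ud)), ud⟫)) :
    matrixOpNorm W ≤ γ / (1 - 2 * ε) :=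
  approx_extreme_eigenvectors_opnorm_bound_general W hW l1 ld ε hε0 hε1 hub hlb u1 ud hu1 h1 hd γ hγ
end

section
/- Let A be a symmetric positive definite d×d matrix and b ∈ ℝ^d nonzero. Define s₁ = (bᵀAb/‖Ab‖²) b (the first conjugate residual iterate from s₀ = 0). Then ‖s₁‖ ≥ ‖b‖/λ_max(A). -/
/-!
Cauchy–Schwarz for the semi-inner product `⟪T ·, ·⟫` of a positive operator, applied to `b` and
`T b`, gives `‖T b‖⁴ ≤ ⟪T b, b⟫ ⟪T (T b), T b⟫ ≤ λ ⟪T b, b⟫ ‖T b‖²`. Hence `‖T b‖² ≤ λ ⟪T b, b⟫`,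
i.e. the first conjugate residual step length `⟪T b, b⟫ / ‖T b‖²` is at least `1 / λ`.
-/

open Matrix

open scoped RealInnerProductSpace

namespace LinearMap.IsPositive

variable {E : Type*} [NormedAddCommGroup E] [InnerProductSpace ℝ E] {T : E →ₗ[ℝ] E}

theorem inner_sq_le (hT : T.IsPositive) (x y : E) :
    ⟪T x, y⟫ ^ 2 ≤ ⟪T x, x⟫ * ⟪T y, y⟫ := by
  have hsymm : ⟪T y, x⟫ = ⟪T x, y⟫ := by rw [hT.isSymmetric, real_inner_comm]
  have hquad : ∀ t : ℝ, 0 ≤ ⟪T x, x⟫ * (t * t) + 2 * ⟪T x, y⟫ * t + ⟪T y, y⟫ := fun t => by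
    have := hT.inner_nonneg_left (t • x + y)
    simp only [map_add, map_smul, inner_add_left, inner_add_right, real_inner_smul_left,
      real_inner_smul_right, hsymm] at this
    linarith
  have := discrim_le_zero hquad
  rw [discrim] at this
  linarith

theorem norm_apply_sq_le (hT : T.IsPositive) {c : ℝ} (hc : ∀ v, ⟪T v, v⟫ ≤ c * ‖v‖ ^ 2)
    (x : E) : ‖T x‖ ^ 2 ≤ c * ⟪T x, x⟫ := by
  by_cases hx : T x = 0
  · simp [hx]
  have hpos : 0 < ‖T x‖ ^ 2 := by positivity
  have hCS : (‖T x‖ ^ 2) ^ 2 ≤ ⟪T x, x⟫ * (c * ‖T x‖ ^ 2) :=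
    calc (‖T x‖ ^ 2) ^ 2 = ⟪T x, T x⟫ ^ 2 := by rw [real_inner_self_eq_norm_sq]
      _ ≤ ⟪T x, x⟫ * ⟪T (T x), T x⟫ := hT.inner_sq_le x (T x)
      _ ≤ ⟪T x, x⟫ * (c * ‖T x‖ ^ 2) := by
        gcongr
        exacts [hT.inner_nonneg_left x, hc (T x)]
  nlinarith

theorem div_le_norm_smul (hT : T.IsPositive) {c : ℝ} (hc : ∀ v, ⟪T v, v⟫ ≤ c * ‖v‖ ^ 2)
    {b : E} (hb : T b ≠ 0) : ‖b‖ / c ≤ ‖(⟪T b, b⟫ / ‖T b‖ ^ 2) • b‖ := by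
  have hTb : 0 < ‖T b‖ ^ 2 := by positivity
  have hkey := hT.norm_apply_sq_le hc b
  have hα := hT.inner_nonneg_left b
  have hcpos : 0 < c := pos_of_mul_pos_left (hTb.trans_le hkey) hα
  rw [norm_smul, Real.norm_of_nonneg (by positivity), div_mul_eq_mul_div,
    div_le_div_iff₀ hcpos hTb]
  nlinarith [mul_le_mul_of_nonneg_left hkey (norm_nonneg b)]

end LinearMap.IsPositive

theorem Matrix.inner_toEuclideanLin_self {n : Type*} [Fintype n] [DecidableEq n]
    (A : Matrix n n ℝ) (v : EuclideanSpace ℝ n) :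
    ⟪A.toEuclideanLin v, v⟫ = WithLp.ofLp v ⬝ᵥ A *ᵥ WithLp.ofLp v := by
  rw [EuclideanSpace.inner_eq_star_dotProduct]
  rfl

theorem Matrix.PosDef.toEuclideanLin_ne_zero {n : Type*} [Fintype n] [DecidableEq n]
    {A : Matrix n n ℝ} (hA : A.PosDef) {v : EuclideanSpace ℝ n} (hv : v ≠ 0) :
    A.toEuclideanLin v ≠ 0 := fun h => by
  have := hA.dotProduct_mulVec_pos (x := WithLp.ofLp v) (by simpa using hv)
  rw [star_trivial, ← inner_toEuclideanLin_self, h, inner_zero_left] at this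
  exact this.false

/-- The first conjugate residual iterate satisfies
`‖s₁‖ ≥ ‖b‖ / λ_max(A)`. -/
theorem first_cr_iterate_lower_bound {d : ℕ}
    (A : Matrix (Fin d) (Fin d) ℝ) (hA : A.PosDef)
    (b : EuclideanSpace ℝ (Fin d)) (hb : b ≠ 0)
    (lmax : ℝ)
    (hmax : ∀ v : EuclideanSpace ℝ (Fin d),
      (v : Fin d → ℝ) ⬝ᵥ A.mulVec v ≤ lmax * ‖v‖ ^ 2)
    (s1 : EuclideanSpace ℝ (Fin d))
    (hs1 : s1 = (((b : Fin d → ℝ) ⬝ᵥ A.mulVec b) /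
      ‖(show EuclideanSpace ℝ (Fin d) from WithLp.toLp 2 (A.mulVec b))‖ ^ 2) • b) :
    ‖b‖ / lmax ≤ ‖s1‖ := by
  have hT : A.toEuclideanLin.IsPositive := isPositive_toEuclideanLin_iff.mpr hA.posSemidef
  have h := hT.div_le_norm_smul (c := lmax)
    (fun v => (inner_toEuclideanLin_self A v).trans_le (hmax v)) (hA.toEuclideanLin_ne_zero hb)
  rw [inner_toEuclideanLin_self] at h
  rwa [hs1]
end

section
/- Let μ, L₁ > 0 with μ ≤ L₁, and let N_tr > 0. Suppose N* ≥ 1 satisfies (1 + (μ/(4L₁))√(N*/N_tr))^{N*} = 1/ε' for some ε' ∈ (0,1). Then N* ≥ ((4L₁√N_tr/μ) log(1/ε'))^{2/3} and N* ≤ log(1/ε') / log(1 + (μ²/(16 L₁² N_tr) · log(1/ε'))^{1/3}). -/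
/-!
Write `c = 4 L₁ √N_tr / μ`. The defining equation then reads
`L := log (1/ε') = N* log (1 + √N*/c)`, and `log (1 + x) ≤ x` gives `c L ≤ N*^{3/2}`, which is the
lower bound. Dividing by `c³`, the same inequality says `b := (L/c²)^{1/3} ≤ √N*/c`, so
`N* = L / log (1 + √N*/c) ≤ L / log (1 + b)`, the upper bound.
-/

open Real

lemma Real.log_one_add_le_self {x : ℝ} (hx : 0 ≤ x) : log (1 + x) ≤ x := by
  linarith [log_le_sub_one_of_pos (by linarith : 0 < 1 + x)]

lemma Real.rpow_three_halves_eq_sqrt_pow_three {x : ℝ} (hx : 0 ≤ x) :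
    x ^ (3 / 2 : ℝ) = √x ^ 3 := by
  rw [sqrt_eq_rpow, ← rpow_natCast, ← rpow_mul hx]
  norm_num

section Crossover

variable {c N : ℝ}

lemma mul_mul_log_one_add_sqrt_div_le (hc : 0 < c) (hN : 0 ≤ N) :
    c * (N * log (1 + √N / c)) ≤ √N ^ 3 := calc
  c * (N * log (1 + √N / c)) ≤ c * (N * (√N / c)) := by
    gcongr
    exact log_one_add_le_self (by positivity)
  _ = √N ^ 3 := by
    rw [pow_succ, sq_sqrt hN]
    field_simp

lemma rpow_two_thirds_mul_mul_log_one_add_sqrt_div_le (hc : 0 < c) (hN : 0 ≤ N) :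
    (c * (N * log (1 + √N / c))) ^ (2 / 3 : ℝ) ≤ N := by
  have hL : 0 ≤ N * log (1 + √N / c) :=
    mul_nonneg hN (log_nonneg (by linarith [div_nonneg (sqrt_nonneg N) hc.le]))
  rw [show (2 / 3 : ℝ) = (3 / 2)⁻¹ by norm_num, rpow_inv_le_iff_of_pos (mul_nonneg hc.le hL) hN
    (by norm_num), rpow_three_halves_eq_sqrt_pow_three hN]
  exact mul_mul_log_one_add_sqrt_div_le hc hN

lemma le_div_log_one_add_rpow_one_third (hc : 0 < c) (hN : 0 < N) :
    N ≤ N * log (1 + √N / c) / log (1 + (N * log (1 + √N / c) / c ^ 2) ^ (1 / 3 : ℝ)) := by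
  set a := √N / c with ha
  set L := N * log (1 + a)
  have ha_pos : 0 < a := by positivity
  have hlog_a : 0 < log (1 + a) := log_pos (by linarith)
  have hL_pos : 0 < L := mul_pos hN hlog_a
  set b := (L / c ^ 2) ^ (1 / 3 : ℝ) with hb
  have hb_pos : 0 < b := by positivity
  have hba : b ≤ a := by
    rw [hb, one_div, rpow_inv_le_iff_of_pos (by positivity) ha_pos.le (by norm_num)]
    calc L / c ^ 2 = c * L / c ^ 3 := by field_simp
      _ ≤ √N ^ 3 / c ^ 3 := by gcongr; exact mul_mul_log_one_add_sqrt_div_le hc hN.le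
      _ = a ^ (3 : ℝ) := by rw [ha]; norm_cast; ring
  calc N = L / log (1 + a) := (eq_div_iff hlog_a.ne').mpr rfl
    _ ≤ L / log (1 + b) :=
      div_le_div_of_nonneg_left hL_pos.le (log_pos (by linarith))
        (log_le_log (by linarith) (by linarith))

end Crossover

theorem crossover_iteration_bounds_general (μ L₁ Ntr ε' Nstar : ℝ)
    (hμ : 0 < μ) (hμL : μ ≤ L₁) (hNtr : 0 < Ntr)
    (hNstar : 1 ≤ Nstar)
    (heq : (1 + (μ / (4 * L₁)) * Real.sqrt (Nstar / Ntr)) ^ Nstar = 1 / ε') :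
    ((4 * L₁ * Real.sqrt Ntr / μ) * Real.log (1 / ε')) ^ ((2 : ℝ) / 3) ≤ Nstar ∧
    Nstar ≤ Real.log (1 / ε') /
      Real.log (1 + ((μ ^ 2 / (16 * L₁ ^ 2 * Ntr)) * Real.log (1 / ε')) ^ ((1 : ℝ) / 3)) := by
  have hL₁ : 0 < L₁ := hμ.trans_le hμL
  have hN : 0 < Nstar := by linarith
  set c := 4 * L₁ * √Ntr / μ with hc
  have hc_pos : 0 < c := by positivity
  have hrate : μ / (4 * L₁) * √(Nstar / Ntr) = √Nstar / c := by
    rw [sqrt_div hN.le, hc]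
    field_simp
  have hcoef : μ ^ 2 / (16 * L₁ ^ 2 * Ntr) = 1 / c ^ 2 := by
    rw [hc, div_pow, mul_pow, sq_sqrt hNtr.le]
    field_simp
    ring
  have hlog : log (1 / ε') = Nstar * log (1 + √Nstar / c) := by
    rw [← heq, hrate, log_rpow (by positivity)]
  rw [hcoef, one_div_mul_eq_div, hlog]
  exact ⟨rpow_two_thirds_mul_mul_log_one_add_sqrt_div_le hc_pos hN.le,
    le_div_log_one_add_rpow_one_third hc_pos hN⟩

/-- Bounds on the crossover iteration count `N*` defined by
`(1 + (μ/(4L₁))√(N*/N_tr))^{N*} = 1/ε'`. -/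
theorem crossover_iteration_bounds (μ L₁ Ntr ε' Nstar : ℝ)
    (hμ : 0 < μ) (hμL : μ ≤ L₁) (hNtr : 0 < Ntr)
    (hNstar : 1 ≤ Nstar) (hε0 : 0 < ε') (hε1 : ε' < 1)
    (heq : (1 + (μ / (4 * L₁)) * Real.sqrt (Nstar / Ntr)) ^ Nstar = 1 / ε') :
    ((4 * L₁ * Real.sqrt Ntr / μ) * Real.log (1 / ε')) ^ ((2 : ℝ) / 3) ≤ Nstar ∧
    Nstar ≤ Real.log (1 / ε') /
      Real.log (1 + ((μ ^ 2 / (16 * L₁ ^ 2 * Ntr)) * Real.log (1 / ε')) ^ ((1 : ℝ) / 3)) :=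
  crossover_iteration_bounds_general μ L₁ Ntr ε' Nstar hμ hμL hNtr hNstar heq
end
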